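/- Let (X, d, ≽) be a radial partially ordered metric space and S a nonempty compact subset of X. Then for every ≽-increasing continuous function f : S → ℝ, there exists a ≽-increasing uniformly continuous function F : X → ℝ with F restricted to S equal to f. -/

import Mathlib

/-!
McShane's extension `x ↦ inf_{s ∈ S} (f s + ω (dist x s))` by a subadditive modulus of continuity
`ω` of `f` is uniformly continuous. Replacing `dist x s` by `orderDist r x s`, which vanishes when
`s ≽ x`, makes the extension increasing, and radiality is exactly what keeps `orderDist r · s`
`1`-Lipschitz and increasing, so the extension is still uniformly continuous and agrees with `f`
on `S`. On a compact set a continuous `f` has a subadditive modulus: the lower envelope of the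
affine functions `t ↦ c + L t` that bound its oscillation.
-/

open Filter Topology Set

section OrderDist

variable {X : Type*} [PseudoMetricSpace X] (r : X → X → Prop)

open Classical in
noncomputable def orderDist (x s : X) : ℝ :=
  if r s x then 0 else dist x s

theorem orderDist_nonneg (x s : X) : 0 ≤ orderDist r x s := by
  unfold orderDist
  split_ifs
  exacts [le_rfl, dist_nonneg]

variable {r}

theorem orderDist_self (hrefl : ∀ x, r x x) (x : X) : orderDist r x x = 0 :=
  if_pos (hrefl x)

theorem orderDist_le_of_rel (htrans : ∀ x y z, r x y → r y z → r x z)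
    (hrad2 : ∀ x y z, r x y ∧ x ≠ y → ¬ r z y → dist y z ≤ dist x z)
    {x y : X} (hxy : r x y) (s : X) : orderDist r y s ≤ orderDist r x s := by
  by_cases hsy : r s y
  · rw [orderDist, if_pos hsy]
    exact orderDist_nonneg r x s
  have hsx : ¬ r s x := fun h => hsy (htrans s x y h hxy)
  rw [orderDist, orderDist, if_neg hsy, if_neg hsx]
  rcases eq_or_ne x y with rfl | hne
  · rfl
  · exact hrad2 x y s ⟨hxy, hne⟩ hsy

theorem orderDist_le_add_dist (hrad1 : ∀ x y z, ¬ r y x → r y z ∧ y ≠ z → dist x y ≤ dist x z)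
    (x x' s : X) : orderDist r x' s ≤ orderDist r x s + dist x x' := by
  unfold orderDist
  split_ifs with hsx' hsx hsx
  · positivity
  · positivity
  · rw [zero_add]
    rcases eq_or_ne s x with rfl | hne
    · rw [dist_comm]
    · exact (hrad1 x' s x hsx' ⟨hsx, hne⟩).trans_eq (dist_comm _ _)
  · linarith [dist_triangle x' x s, dist_comm x x']

end OrderDist

section Modulus

variable {X : Type*} [PseudoMetricSpace X]

structure IsSubadditiveModulus (ω : ℝ → ℝ) : Prop where
  nonneg : ∀ ⦃t⦄, 0 ≤ t → 0 ≤ ω t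
  monotoneOn : MonotoneOn ω (Ici 0)
  add_le : ∀ ⦃t u⦄, 0 ≤ t → 0 ≤ u → ω (t + u) ≤ ω t + ω u
  tendsto_zero : Tendsto ω (𝓝[≥] 0) (𝓝 0)

namespace IsSubadditiveModulus

variable {ω : ℝ → ℝ}

theorem map_zero (hω : IsSubadditiveModulus ω) : ω 0 = 0 :=
  tendsto_nhds_unique (tendsto_pure_nhds ω 0)
    (hω.tendsto_zero.mono_left (pure_le_nhdsWithin self_mem_Ici))

theorem uniformContinuous (hω : IsSubadditiveModulus ω) {F : X → ℝ}
    (hF : ∀ x y, F x ≤ F y + ω (dist x y)) : UniformContinuous F := by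
  rw [Metric.uniformContinuous_iff]
  intro ε hε
  obtain ⟨δ, hδ, hωδ⟩ := Metric.tendsto_nhdsWithin_nhds.1 hω.tendsto_zero ε hε
  refine ⟨δ, hδ, fun {x y} hxy => ?_⟩
  have hsmall : ω (dist x y) < ε := by
    have hd : dist (dist x y) 0 < δ := by rwa [Real.dist_0_eq_abs, abs_of_nonneg dist_nonneg]
    have := hωδ (mem_Ici.2 dist_nonneg) hd
    rw [Real.dist_0_eq_abs] at this
    exact (le_abs_self _).trans_lt this
  have hyx := hF y x
  rw [dist_comm] at hyx
  rw [Real.dist_eq, abs_sub_lt_iff]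
  constructor <;> linarith [hF x y]

end IsSubadditiveModulus

variable {S : Set X} {f : X → ℝ}

variable (S f) in
def oscillationBounds : Set (ℝ × ℝ) :=
  {p | 0 ≤ p.1 ∧ 0 ≤ p.2 ∧ ∀ a ∈ S, ∀ b ∈ S, f a ≤ f b + p.2 + p.1 * dist a b}

variable (S f) in
/-- The lower envelope of the affine bounds is concave, hence subadditive; the plain modulus of
continuity of `f` need not be. -/
noncomputable def oscillationModulus (t : ℝ) : ℝ :=
  ⨅ p : oscillationBounds S f, p.1.2 + p.1.1 * t

theorem min_add_mem_oscillationBounds {p q : ℝ × ℝ} (hp : p ∈ oscillationBounds S f)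
    (hq : q ∈ oscillationBounds S f) : (min p.1 q.1, p.2 + q.2) ∈ oscillationBounds S f := by
  refine ⟨le_min hp.1 hq.1, add_nonneg hp.2.1 hq.2.1, fun a ha b hb => ?_⟩
  rcases min_cases p.1 q.1 with ⟨hmin, -⟩ | ⟨hmin, -⟩ <;> rw [hmin]
  · linarith [hp.2.2 a ha b hb, hq.2.1]
  · linarith [hq.2.2 a ha b hb, hp.2.1]

theorem exists_zero_mem_oscillationBounds (hfa : BddAbove (f '' S)) (hfb : BddBelow (f '' S)) :
    ∃ M, (0, M) ∈ oscillationBounds S f := by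
  obtain ⟨B, hB⟩ := hfa
  obtain ⟨A, hA⟩ := hfb
  refine ⟨max (B - A) 0, le_rfl, le_max_right _ _, fun a ha b hb => ?_⟩
  linarith [hB (mem_image_of_mem f ha), hA (mem_image_of_mem f hb), le_max_left (B - A) 0]

theorem exists_mem_oscillationBounds_of_pos (huc : UniformContinuousOn f S) {M : ℝ}
    (hM : (0, M) ∈ oscillationBounds S f) {η : ℝ} (hη : 0 < η) :
    ∃ L, (L, η) ∈ oscillationBounds S f := by
  obtain ⟨δ, hδ, hfδ⟩ := Metric.uniformContinuousOn_iff.1 huc η hη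
  have hL : 0 ≤ M / δ := div_nonneg hM.2.1 hδ.le
  refine ⟨M / δ, hL, hη.le, fun a ha b hb => ?_⟩
  rcases lt_or_ge (dist a b) δ with hab | hab
  · have := hfδ a ha b hb hab
    rw [Real.dist_eq] at this
    linarith [le_abs_self (f a - f b), mul_nonneg hL (dist_nonneg (x := a) (y := b))]
  · have hMδ : M ≤ M / δ * dist a b := by
      calc M = M / δ * δ := (div_mul_cancel₀ M hδ.ne').symm
        _ ≤ M / δ * dist a b := mul_le_mul_of_nonneg_left hab hL
    linarith [hM.2.2 a ha b hb]

theorem oscillationModulus_le {p : ℝ × ℝ} (hp : p ∈ oscillationBounds S f) {t : ℝ} (ht : 0 ≤ t) :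
    oscillationModulus S f t ≤ p.2 + p.1 * t := by
  refine ciInf_le ⟨0, ?_⟩ (⟨p, hp⟩ : oscillationBounds S f)
  rintro _ ⟨q, rfl⟩
  exact add_nonneg q.2.2.1 (mul_nonneg q.2.1 ht)

section Nonempty

variable [Nonempty (oscillationBounds S f)]

theorem le_oscillationModulus {c t : ℝ} (h : ∀ p ∈ oscillationBounds S f, c ≤ p.2 + p.1 * t) :
    c ≤ oscillationModulus S f t :=
  le_ciInf fun p => h p p.2

theorem le_add_oscillationModulus {a b : X} (ha : a ∈ S) (hb : b ∈ S) :
    f a ≤ f b + oscillationModulus S f (dist a b) := by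
  have : f a - f b ≤ oscillationModulus S f (dist a b) :=
    le_oscillationModulus fun p hp => by linarith [hp.2.2 a ha b hb]
  linarith

theorem oscillationModulus_nonneg {t : ℝ} (ht : 0 ≤ t) : 0 ≤ oscillationModulus S f t :=
  le_oscillationModulus fun _ hp => add_nonneg hp.2.1 (mul_nonneg hp.1 ht)

theorem monotoneOn_oscillationModulus : MonotoneOn (oscillationModulus S f) (Ici 0) :=
  fun _ ht _ _ htu => le_oscillationModulus fun _ hp =>
    (oscillationModulus_le hp ht).trans (by gcongr; exact hp.1)

theorem oscillationModulus_add_le {t u : ℝ} (ht : 0 ≤ t) (hu : 0 ≤ u) :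
    oscillationModulus S f (t + u) ≤ oscillationModulus S f t + oscillationModulus S f u := by
  refine le_ciInf_add_ciInf fun p q => ?_
  refine (oscillationModulus_le (min_add_mem_oscillationBounds p.2 q.2) (add_nonneg ht hu)).trans ?_
  have hpt : min p.1.1 q.1.1 * t ≤ p.1.1 * t := mul_le_mul_of_nonneg_right (min_le_left _ _) ht
  have hqu : min p.1.1 q.1.1 * u ≤ q.1.1 * u := mul_le_mul_of_nonneg_right (min_le_right _ _) hu
  linarith

end Nonempty

theorem tendsto_oscillationModulus (hsmall : ∀ η > 0, ∃ L, (L, η) ∈ oscillationBounds S f) :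
    Tendsto (oscillationModulus S f) (𝓝[≥] 0) (𝓝 0) := by
  refine Metric.tendsto_nhdsWithin_nhds.2 fun ε hε => ?_
  obtain ⟨L, hL⟩ := hsmall (ε / 2) (half_pos hε)
  have : Nonempty (oscillationBounds S f) := ⟨⟨_, hL⟩⟩
  refine ⟨ε / 2 / (L + 1), by have := hL.1; positivity, fun t (ht : 0 ≤ t) htδ => ?_⟩
  rw [Real.dist_0_eq_abs, abs_of_nonneg ht] at htδ
  rw [Real.dist_0_eq_abs, abs_of_nonneg (oscillationModulus_nonneg ht)]
  have hLt : L * t ≤ (L + 1) * t := by linarith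
  have hLt' : (L + 1) * t < ε / 2 := by
    rwa [lt_div_iff₀ (by linarith [hL.1]), mul_comm] at htδ
  linarith [oscillationModulus_le hL ht]

theorem IsCompact.exists_subadditiveModulus (hS : IsCompact S) (hf : ContinuousOn f S) :
    ∃ ω, IsSubadditiveModulus ω ∧ ∀ a ∈ S, ∀ b ∈ S, f a ≤ f b + ω (dist a b) := by
  obtain ⟨M, hM⟩ := exists_zero_mem_oscillationBounds (hS.bddAbove_image hf) (hS.bddBelow_image hf)
  have : Nonempty (oscillationBounds S f) := ⟨⟨_, hM⟩⟩
  have hsmall η (hη : 0 < η) :=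
    exists_mem_oscillationBounds_of_pos (hS.uniformContinuousOn_of_continuous hf) hM hη
  exact ⟨oscillationModulus S f,
    ⟨fun _ => oscillationModulus_nonneg, monotoneOn_oscillationModulus,
      fun _ _ => oscillationModulus_add_le, tendsto_oscillationModulus hsmall⟩,
    fun _ ha _ hb => le_add_oscillationModulus ha hb⟩

end Modulus

section RadialExtension

variable {X : Type*} [PseudoMetricSpace X] {r : X → X → Prop} {S : Set X} {f : X → ℝ} {ω : ℝ → ℝ}

variable (r S f ω) in
noncomputable def radialExtension (x : X) : ℝ :=
  ⨅ s : S, f s + ω (orderDist r x s)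

theorem radialExtension_le (hf : BddBelow (f '' S)) (hω : IsSubadditiveModulus ω) (x : X)
    {s : X} (hs : s ∈ S) : radialExtension r S f ω x ≤ f s + ω (orderDist r x s) := by
  obtain ⟨A, hA⟩ := hf
  refine ciInf_le ⟨A, ?_⟩ (⟨s, hs⟩ : S)
  rintro _ ⟨s', rfl⟩
  linarith [hA (mem_image_of_mem f s'.2), hω.nonneg (orderDist_nonneg r x s')]

theorem le_radialExtension [Nonempty S] {x : X} {c : ℝ}
    (h : ∀ s ∈ S, c ≤ f s + ω (orderDist r x s)) : c ≤ radialExtension r S f ω x :=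
  le_ciInf fun s => h s s.2

theorem radialExtension_le_of_rel [Nonempty S] (htrans : ∀ x y z, r x y → r y z → r x z)
    (hrad2 : ∀ x y z, r x y ∧ x ≠ y → ¬ r z y → dist y z ≤ dist x z)
    (hf : BddBelow (f '' S)) (hω : IsSubadditiveModulus ω) {x y : X} (hxy : r x y) :
    radialExtension r S f ω y ≤ radialExtension r S f ω x :=
  le_radialExtension fun s hs => (radialExtension_le hf hω y hs).trans <|
    add_le_add_right (hω.monotoneOn (orderDist_nonneg r y s) (orderDist_nonneg r x s)
      (orderDist_le_of_rel htrans hrad2 hxy s)) _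

theorem radialExtension_le_add [Nonempty S]
    (hrad1 : ∀ x y z, ¬ r y x → r y z ∧ y ≠ z → dist x y ≤ dist x z)
    (hf : BddBelow (f '' S)) (hω : IsSubadditiveModulus ω) (x y : X) :
    radialExtension r S f ω x ≤ radialExtension r S f ω y + ω (dist x y) := by
  suffices radialExtension r S f ω x - ω (dist x y) ≤ radialExtension r S f ω y by linarith
  refine le_radialExtension fun s hs => ?_
  have hωxs : ω (orderDist r x s) ≤ ω (orderDist r y s) + ω (dist x y) :=
    calc ω (orderDist r x s) ≤ ω (orderDist r y s + dist x y) := by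
          refine hω.monotoneOn (orderDist_nonneg r x s)
            (add_nonneg (orderDist_nonneg r y s) dist_nonneg) ?_
          rw [dist_comm]
          exact orderDist_le_add_dist hrad1 y x s
      _ ≤ ω (orderDist r y s) + ω (dist x y) :=
          hω.add_le (orderDist_nonneg r y s) dist_nonneg
  linarith [radialExtension_le (r := r) hf hω x hs]

theorem radialExtension_eq_of_mem (hrefl : ∀ x, r x x)
    (hmono : ∀ x ∈ S, ∀ y ∈ S, r x y → f y ≤ f x) (hf : BddBelow (f '' S))
    (hω : IsSubadditiveModulus ω) (hfω : ∀ a ∈ S, ∀ b ∈ S, f a ≤ f b + ω (dist a b))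
    {x : X} (hx : x ∈ S) : radialExtension r S f ω x = f x := by
  have : Nonempty S := ⟨⟨x, hx⟩⟩
  refine le_antisymm ?_ (le_radialExtension fun s hs => ?_)
  · simpa [orderDist_self hrefl, hω.map_zero] using radialExtension_le (r := r) hf hω x hx
  · unfold orderDist
    split_ifs with hsx
    · linarith [hmono s hs x hx hsx, hω.map_zero]
    · exact hfω x hx s hs

end RadialExtension

theorem exists_monotone_uniformlyContinuous_extension_of_compact_general
    {X : Type*} [MetricSpace X] (r : X → X → Prop)
    (hrefl : ∀ x, r x x)
    (htrans : ∀ x y z, r x y → r y z → r x z)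
    (hrad1 : ∀ x y z, ¬ r y x → r y z ∧ y ≠ z → dist x y ≤ dist x z)
    (hrad2 : ∀ x y z, r x y ∧ x ≠ y → ¬ r z y → dist y z ≤ dist x z)
    (S : Set X) (hS : S.Nonempty) (hScomp : IsCompact S) (f : X → ℝ)
    (hmono : ∀ x ∈ S, ∀ y ∈ S, r x y → f y ≤ f x)
    (hcont : ContinuousOn f S) :
    ∃ F : X → ℝ, (∀ x y, r x y → F y ≤ F x) ∧ UniformContinuous F ∧
      ∀ x ∈ S, F x = f x := by
  obtain ⟨ω, hω, hfω⟩ := hScomp.exists_subadditiveModulus hcont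
  have hf := hScomp.bddBelow_image hcont
  have : Nonempty S := hS.to_subtype
  exact ⟨radialExtension r S f ω,
    fun _ _ hxy => radialExtension_le_of_rel htrans hrad2 hf hω hxy,
    hω.uniformContinuous (radialExtension_le_add hrad1 hf hω),
    fun _ hx => radialExtension_eq_of_mem hrefl hmono hf hω hfω hx⟩

/-- **Corollary 15.** Let `(X, d, ≽)` be a radial metric poset and `S ⊆ X`
nonempty and compact. Every `≽`-increasing continuous `f : S → ℝ` extends to
an `≽`-increasing uniformly continuous `F : X → ℝ`. Here `r x y` means
`x ≽ y`. -/
theorem exists_monotone_uniformlyContinuous_extension_of_compact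
    {X : Type*} [MetricSpace X] (r : X → X → Prop)
    (hrefl : ∀ x, r x x)
    (htrans : ∀ x y z, r x y → r y z → r x z)
    (hantisymm : ∀ x y, r x y → r y x → x = y)
    (hrad1 : ∀ x y z, ¬ r y x → r y z ∧ y ≠ z → dist x y ≤ dist x z)
    (hrad2 : ∀ x y z, r x y ∧ x ≠ y → ¬ r z y → dist y z ≤ dist x z)
    (S : Set X) (hS : S.Nonempty) (hScomp : IsCompact S) (f : X → ℝ)
    (hmono : ∀ x ∈ S, ∀ y ∈ S, r x y → f y ≤ f x)
    (hcont : ContinuousOn f S) :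
    ∃ F : X → ℝ, (∀ x y, r x y → F y ≤ F x) ∧ UniformContinuous F ∧
      ∀ x ∈ S, F x = f x :=
  exists_monotone_uniformlyContinuous_extension_of_compact_general r hrefl htrans hrad1 hrad2 S hS
    hScomp f hmono hcont
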